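/- arXiv:0908.0859 — 2 statements merged into one kernel-verified Lean document; each statement's English description precedes it below -/
import Mathlib

section
/- For any natural number n, the alternating binomial sum ∑_{j=0}^{n} (-1)^j C(n,j) (n-2j)^n equals 2^n · n!. -/
/-!
Up to the sign `(-1)^n`, the sum is the `n`-th forward difference at `0` of `r ↦ (b r + a)^n`
with `b = -2`, `a = n`. Its monomials of degree `< n` are killed by `Δ^n`, and `Δ^n r^n = n!`,
so the difference is the constant `b^n n!`.
-/

open Finset Nat fwdDiff

variable {R : Type*} [CommRing R]

theorem fwdDiff_iter_mul_add_pow (a b : R) (n : ℕ) :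
    (Δ_[1])^[n] (fun r : R ↦ (b * r + a) ^ n) = fun _ ↦ b ^ n * n ! := by
  have hexpand : (fun r : R ↦ (b * r + a) ^ n) =
      (fun r ↦ ∑ k ∈ range n, (b ^ k * a ^ (n - k) * n.choose k) * r ^ k) +
        b ^ n • fun r ↦ r ^ n := by
    funext r
    simp only [add_pow, sum_range_succ, mul_pow, Nat.sub_self, pow_zero, Nat.choose_self,
      Pi.add_apply, Pi.smul_apply, smul_eq_mul]
    push_cast
    ring_nf
  rw [hexpand, fwdDiff_iter_add, fwdDiff_iter_sum_mul_pow_eq_zero, fwdDiff_iter_const_smul,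
    fwdDiff_iter_eq_factorial]
  funext
  simp

theorem alternating_sum_range_choose_mul_add_pow (a b : R) (n : ℕ) :
    ∑ j ∈ range (n + 1), (-1) ^ j * (n.choose j : R) * (a + b * j) ^ n = (-b) ^ n * n ! := by
  have hnewton := fwdDiff_iter_eq_sum_shift 1 (fun r : R ↦ (b * r + a) ^ n) n 0
  simp only [fwdDiff_iter_mul_add_pow, zsmul_eq_mul, zero_add, nsmul_one, Int.cast_mul,
    Int.cast_pow, Int.cast_neg, Int.cast_one, Int.cast_natCast] at hnewton
  calc ∑ j ∈ range (n + 1), (-1) ^ j * (n.choose j : R) * (a + b * j) ^ n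
      = ∑ j ∈ range (n + 1), (-1) ^ n * ((-1) ^ (n - j) * (n.choose j : R) * (b * j + a) ^ n) := by
        refine sum_congr rfl fun j hj ↦ ?_
        have hsign : (-1 : R) ^ n = (-1) ^ j * (-1) ^ (n - j) := by
          rw [← pow_add, Nat.add_sub_cancel' (mem_range_succ_iff.mp hj)]
        have hsq : (-1 : R) ^ (n - j) * (-1) ^ (n - j) = 1 := by
          rw [← mul_pow]; simp
        rw [hsign]
        linear_combination (-(-1) ^ j * (n.choose j : R) * (a + b * j) ^ n) * hsq
    _ = (-1) ^ n * (b ^ n * n !) := by rw [← mul_sum, ← hnewton]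
    _ = (-b) ^ n * n ! := by rw [neg_pow]; ring

/-- For any natural number `n`, the alternating binomial sum
`∑_{j=0}^{n} (-1)^j C(n,j) (n-2j)^n` equals `2^n · n!`. -/
theorem alternating_binomial_sum_pow_self (n : ℕ) :
    ∑ j ∈ Finset.range (n + 1),
      (-1 : ℤ) ^ j * (n.choose j : ℤ) * ((n : ℤ) - 2 * j) ^ n
      = 2 ^ n * (n.factorial : ℤ) := by
  simpa [sub_eq_add_neg] using alternating_sum_range_choose_mul_add_pow (n : ℤ) (-2) n
end

section
/- Let (M, g) be a Riemannian manifold with an almost-complex structure J compatible with a closed 2-form ω via g(·,·) = ω(·, J·). If the identity (D_X ω)(Y,Z) = 2 g(JX, N(Y,Z)) holds, where N is the Nijenhuis tensor and D the Levi-Civita connection, then D_{JX} J = -J ∘ (D_X J) for all vector fields X. -/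
noncomputable section

/-- An abstract model of the vector-field calculus of an almost-Kähler
manifold: `R` plays the role of the ring of smooth functions, `X` of the
module of vector fields, `act` of the derivation action of vector fields on
functions, `bracket` of the Lie bracket, `D` of the Levi-Civita connection,
`J` of the almost-complex structure, `g` of the Riemannian metric and `ω` of
the (closed) symplectic form, with `g(·,·) = ω(·, J·)`. -/
structure AK (R : Type*) (X : Type*) [CommRing R] [Algebra ℝ R]
    [AddCommGroup X] [Module R X] where
  act : X → R → R
  bracket : X → X → X
  D : X → X → X
  J : X → X
  g : X → X → R
  ω : X → X → R
  act_addx : ∀ x y f, act (x + y) f = act x f + act y f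
  act_smulx : ∀ (h : R) (x : X) (f : R), act (h • x) f = h * act x f
  act_addf : ∀ x f h, act x (f + h) = act x f + act x h
  act_deriv : ∀ x f h, act x (f * h) = act x f * h + f * act x h
  act_bracket : ∀ x y f, act (bracket x y) f = act x (act y f) - act y (act x f)
  bracket_antisymm : ∀ x y, bracket x y = - bracket y x
  g_symm : ∀ x y, g x y = g y x
  g_add₁ : ∀ x y z, g (x + y) z = g x z + g y z
  g_add₂ : ∀ x y z, g x (y + z) = g x y + g x z
  g_smul₁ : ∀ (f : R) x y, g (f • x) y = f * g x y
  g_smul₂ : ∀ (f : R) x y, g x (f • y) = f * g x y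
  g_nondeg : ∀ x, (∀ y, g x y = 0) → x = 0
  J_add : ∀ x y, J (x + y) = J x + J y
  J_smul : ∀ (f : R) x, J (f • x) = f • J x
  J_sq : ∀ x, J (J x) = - x
  compat : ∀ x y, g x y = ω x (J y)
  g_Jinv : ∀ x y, g (J x) (J y) = g x y
  D_add₁ : ∀ x y z, D (x + y) z = D x z + D y z
  D_add₂ : ∀ x y z, D x (y + z) = D x y + D x z
  D_tensor : ∀ (f : R) x y, D (f • x) y = f • D x y
  D_leibniz : ∀ (f : R) x y, D x (f • y) = act x f • y + f • D x y
  D_torsionfree : ∀ x y, D x y - D y x = bracket x y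
  D_metric : ∀ x y z, act x (g y z) = g (D x y) z + g y (D x z)
  ω_closed : ∀ x y z,
    act x (ω y z) - act y (ω x z) + act z (ω x y)
      - ω (bracket x y) z + ω (bracket x z) y - ω (bracket y z) x = 0

namespace AK

variable {R : Type*} {X : Type*} [CommRing R] [Algebra ℝ R]
  [AddCommGroup X] [Module R X] [Module ℝ X] (C : AK R X)

/-- The Nijenhuis tensor `4N(X,Y) = [JX,JY] - [X,Y] - J[JX,Y] - J[X,JY]`. -/
def N (x y : X) : X :=
  (4 : ℝ)⁻¹ • (C.bracket (C.J x) (C.J y) - C.bracket x y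
    - C.J (C.bracket (C.J x) y) - C.J (C.bracket x (C.J y)))

/-- The covariant derivative `(D_X J)(Y)` of `J`. -/
def DJ (x y : X) : X := C.D x (C.J y) - C.J (C.D x y)

/-- The Riemann curvature operator `R(X,Y)Z`. -/
def Riem (x y z : X) : X :=
  C.D x (C.D y z) - C.D y (C.D x z) - C.D (C.bracket x y) z

variable {ι : Type*} [Fintype ι] [DecidableEq ι]

/-- The `*`-Ricci form `ρ* = R(ω)`, computed in the orthonormal frame `e`:
`ρ*(X,Y) = (1/2) ∑ᵢ g(R(X,Y)eᵢ, Jeᵢ)`. -/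
def rhoStar (e : ι → X) (x y : X) : R :=
  (2 : ℝ)⁻¹ • ∑ i, C.g (C.Riem x y (e i)) (C.J (e i))

/-- The hermitian Ricci form of the canonical hermitian connection, via
`ρ^∇(X,Y) = ρ*(X,Y) - (1/4) tr(J ∘ D_X J ∘ D_Y J)` (identity (2.10)). -/
def rho (e : ι → X) (x y : X) : R :=
  C.rhoStar e x y
    - (4 : ℝ)⁻¹ • ∑ i, C.g (C.J (C.DJ x (C.DJ y (e i)))) (e i)

/-- The hermitian scalar curvature `s^∇ = 2Λ_ω ρ^∇ = ∑ᵢ ρ^∇(eᵢ, Jeᵢ)`. -/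
def scalH (e : ι → X) : R := ∑ i, C.rho e (e i) (C.J (e i))

/-- The Riemannian Laplacian `Δ f = -tr_g (D df)`. -/
def lap (e : ι → X) (f : R) : R :=
  - ∑ i, (C.act (e i) (C.act (e i) f) - C.act (C.D (e i) (e i)) f)

/-- `e` is a `g`-orthonormal frame of the module of vector fields. -/
def IsFrame (e : ι → X) : Prop :=
  (∀ i j, C.g (e i) (e j) = if i = j then 1 else 0) ∧
    ∀ x, x = ∑ i, C.g x (e i) • e i

/-- `x` is a Killing vector field: `L_x g = 0`. -/
def Killing (x : X) : Prop :=
  ∀ y z, C.act x (C.g y z) - C.g (C.bracket x y) z - C.g y (C.bracket x z) = 0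

/-- `x` is a (pseudo-)holomorphic vector field: `L_x J = 0`. -/
def Holomorphic (x : X) : Prop :=
  ∀ y, C.bracket x (C.J y) = C.J (C.bracket x y)

/-- `x` is hamiltonian with hamiltonian function `f`: `ω(x, ·) = -df`. -/
def Hamiltonian (x : X) (f : R) : Prop := ∀ y, C.ω x y = - C.act y f

end AK

end

/-!
Since `ω(Y,Z) = -g(Y,JZ)` and `D` is metric, `(D_X ω)(Y,Z) = -g(Y, (D_X J)Z)`, so (2.4) reads
`g(Y, (D_X J)Z) = -2 g(JX, N(Y,Z))`. Replacing `X` by `JX` and moving `J` across `g` and `N`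
(`g(J·,·) = -g(·,J·)`, `N(J·,·) = -J N(·,·)`) shows that `(D_{JX} J)Z` and `-J (D_X J)Z` have
the same inner product with every `Y`, and `g` is nondegenerate.
-/

namespace AK

variable {R X : Type*} [CommRing R] [Algebra ℝ R] [AddCommGroup X] [Module R X] (C : AK R X)

lemma J_neg (x : X) : C.J (-x) = -C.J x := map_neg (AddMonoidHom.mk' C.J C.J_add) x

lemma J_sub (x y : X) : C.J (x - y) = C.J x - C.J y := map_sub (AddMonoidHom.mk' C.J C.J_add) x y

lemma J_inv_natCast_smul [Module ℝ X] (n : ℕ) (x : X) :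
    C.J ((n⁻¹ : ℝ) • x) = (n⁻¹ : ℝ) • C.J x :=
  map_inv_natCast_smul (AddMonoidHom.mk' C.J C.J_add) ℝ ℝ n x

lemma g_neg₂ (x y : X) : C.g x (-y) = -C.g x y := map_neg (AddMonoidHom.mk' (C.g x) (C.g_add₂ x)) y

lemma g_sub₂ (x y z : X) : C.g x (y - z) = C.g x y - C.g x z :=
  map_sub (AddMonoidHom.mk' (C.g x) (C.g_add₂ x)) y z

lemma act_neg (x : X) (f : R) : C.act x (-f) = -C.act x f :=
  map_neg (AddMonoidHom.mk' (C.act x) (C.act_addf x)) f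

lemma D_neg₁ (x y : X) : C.D (-x) y = -C.D x y :=
  map_neg (AddMonoidHom.mk' (C.D · y) (C.D_add₁ · · y)) x

lemma D_neg₂ (x y : X) : C.D x (-y) = -C.D x y := map_neg (AddMonoidHom.mk' (C.D x) (C.D_add₂ x)) y

lemma bracket_neg₁ (x y : X) : C.bracket (-x) y = -C.bracket x y := by
  rw [← C.D_torsionfree, ← C.D_torsionfree, D_neg₁, D_neg₂]
  abel

lemma g_J_left (x y : X) : C.g (C.J x) y = -C.g x (C.J y) := by
  rw [← C.g_Jinv x (C.J y), C.J_sq, g_neg₂, neg_neg]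

lemma ω_eq_neg_g_J (x y : X) : C.ω x y = -C.g x (C.J y) := by
  rw [← neg_neg (C.J y), g_neg₂, neg_neg, C.compat, ← J_neg, C.J_sq, neg_neg]

lemma covDeriv_ω_eq_neg_g_DJ (x y z : X) :
    C.act x (C.ω y z) - C.ω (C.D x y) z - C.ω y (C.D x z) = -C.g y (C.DJ x z) := by
  simp only [ω_eq_neg_g_J, act_neg, C.D_metric, DJ, g_sub₂]
  ring

lemma N_J_left [Module ℝ X] (x y : X) : C.N (C.J x) y = -C.J (C.N x y) := by
  have h4 : (4 : ℝ)⁻¹ = ((4 : ℕ) : ℝ)⁻¹ := by norm_num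
  rw [N, N, h4, J_inv_natCast_smul, ← smul_neg, C.J_sq, bracket_neg₁, bracket_neg₁, J_neg,
    J_sub, J_sub, J_sub, C.J_sq, C.J_sq]
  congr 1
  abel

lemma eq_of_forall_g_eq {a b : X} (h : ∀ y, C.g y a = C.g y b) : a = b := by
  refine sub_eq_zero.mp (C.g_nondeg _ fun y => ?_)
  rw [C.g_symm, g_sub₂, h, sub_self]

end AK

theorem DJ_anti_invariant_of_nijenhuis_identity_general
    {R : Type*} {X : Type*} [CommRing R] [Algebra ℝ R]
    [AddCommGroup X] [Module R X] [Module ℝ X]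
    (C : AK R X)
    (h24 : ∀ x y z,
      C.act x (C.ω y z) - C.ω (C.D x y) z - C.ω y (C.D x z)
        = 2 * C.g (C.J x) (C.N y z)) :
    ∀ x y, C.DJ (C.J x) y = - C.J (C.DJ x y) := by
  have hDJ : ∀ x y z, C.g y (C.DJ x z) = -(2 * C.g (C.J x) (C.N y z)) := fun x y z => by
    rw [← h24, C.covDeriv_ω_eq_neg_g_DJ, neg_neg]
  intro x y
  refine C.eq_of_forall_g_eq fun z => ?_
  calc C.g z (C.DJ (C.J x) y)
      = -(2 * C.g (C.J (C.J x)) (C.N z y)) := hDJ _ _ _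
    _ = -(2 * C.g (C.J x) (C.N (C.J z) y)) := by rw [C.g_J_left, C.N_J_left, C.g_neg₂]
    _ = C.g (C.J z) (C.DJ x y) := (hDJ _ _ _).symm
    _ = C.g z (-C.J (C.DJ x y)) := by rw [C.g_J_left, C.g_neg₂]

/-- If the identity `(D_X ω)(Y,Z) = 2 g(JX, N(Y,Z))` (identity (2.4)) holds on
an almost-Kähler manifold, then `D_{JX} J = -J ∘ (D_X J)` (identity (2.5)). -/
theorem DJ_anti_invariant_of_nijenhuis_identity
    {R : Type*} {X : Type*} [CommRing R] [Algebra ℝ R]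
    [AddCommGroup X] [Module R X] [Module ℝ X] [IsScalarTower ℝ R X]
    (C : AK R X)
    (h24 : ∀ x y z,
      C.act x (C.ω y z) - C.ω (C.D x y) z - C.ω y (C.D x z)
        = 2 * C.g (C.J x) (C.N y z)) :
    ∀ x y, C.DJ (C.J x) y = - C.J (C.DJ x y) :=
  DJ_anti_invariant_of_nijenhuis_identity_general C h24
end
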